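/- arXiv:2307.07182 — 2 statements merged into one kernel-verified Lean document; each statement's English description precedes it below -/
import Mathlib

section
/- Let R be a polynomial in the shift operator, R = T^k + a₁T^(k−1) + ⋯ + a_k·I with complex coefficients and a_k ≠ 0, and factor its characteristic polynomial as ∏_{i=1}^{l}(X − μ_i)^{s_i} with distinct nonzero roots μ_i. Let μ ∈ ℂ be nonzero with μ ≠ μ_i for all i, and let L = span{μ^n, n μ^n, …, n^s μ^n}. Then R restricted to L is an invertible linear map (automorphism of L). -/
open Polynomial

/-- The shift operator `(T y) n = y (n+1)` on complex-valued sequences. -/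
def shift : Module.End ℂ (ℕ → ℂ) where
  toFun y := fun n => y (n + 1)
  map_add' _ _ := rfl
  map_smul' _ _ := rfl

/-- The basis sequences `n ↦ n^k μ^n`. -/
def basisSeq (mu : ℂ) (k : ℕ) : ℕ → ℂ := fun n => (n : ℂ) ^ k * mu ^ n

/-!
With `D = T - μ`, the binomial theorem gives
`D (n^k μ^n) = ∑_{j<k} (k choose j) μ · n^j μ^n`, so `L` is `T`-invariant and `D^(s+1)` vanishes
on `L`. Since `X - μ` does not divide `p`, the polynomials `p` and `(X - μ)^(s+1)` are coprime,
so `p(T)` is injective on `L`; as `L` is finite-dimensional, it is bijective.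
-/

section Coprime

variable {K V : Type*} [Field K] [AddCommGroup V] [Module K V]

theorem Polynomial.aeval_apply_mem_of_mapsTo {f : Module.End K V} {L : Submodule K V}
    (hf : ∀ y ∈ L, f y ∈ L) (q : K[X]) {v : V} (hv : v ∈ L) : aeval f q v ∈ L := by
  rw [aeval_endomorphism]
  refine Submodule.sum_mem _ fun n _ => L.smul_mem _ ?_
  rw [Module.End.pow_apply]
  exact Set.MapsTo.iterate (f := f) hf n hv

theorem Polynomial.bijective_restrict_aeval_of_isCoprime {f : Module.End K V}
    {L : Submodule K V} [FiniteDimensional K L] {p q : K[X]} (hpq : IsCoprime p q)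
    (hq : ∀ y ∈ L, aeval f q y = 0) (h : ∀ y ∈ L, aeval f p y ∈ L) :
    Function.Bijective ((aeval f p : Module.End K V).restrict h) := by
  have hinj : Function.Injective ((aeval f p : Module.End K V).restrict h) := by
    rw [← LinearMap.ker_eq_bot, LinearMap.ker_eq_bot']
    intro y hy
    exact Subtype.ext (Submodule.disjoint_def.mp (disjoint_ker_aeval_of_isCoprime f hpq) y
      (LinearMap.mem_ker.mpr (congrArg Subtype.val hy)) (hq y y.2))
  exact ⟨hinj, LinearMap.injective_iff_surjective.mp hinj⟩

end Coprime

theorem aeval_shift_X_sub_C_basisSeq (mu : ℂ) (k : ℕ) :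
    aeval shift (X - C mu) (basisSeq mu k)
      = ∑ j ∈ Finset.range k, ((k.choose j : ℂ) * mu) • basisSeq mu j := by
  funext n
  have hbinom : ((n : ℂ) + 1) ^ k = ∑ j ∈ Finset.range (k + 1), (n : ℂ) ^ j * k.choose j := by
    simp [add_pow]
  simp only [map_sub, aeval_X, aeval_C, LinearMap.sub_apply, Module.algebraMap_end_apply,
    Pi.sub_apply, Pi.smul_apply, Finset.sum_apply, smul_eq_mul, shift, basisSeq,
    LinearMap.coe_mk, AddHom.coe_mk]
  push_cast
  have hterm (j : ℕ) :
      (n : ℂ) ^ j * k.choose j * mu ^ (n + 1) = k.choose j * mu * (n ^ j * mu ^ n) := by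
    ring
  rw [hbinom, Finset.sum_range_succ, Nat.choose_self, add_mul, Finset.sum_mul]
  simp only [hterm]
  push_cast
  ring

theorem aeval_shift_X_sub_C_pow_basisSeq (mu : ℂ) {k m : ℕ} (hkm : k < m) :
    aeval shift ((X - C mu) ^ m) (basisSeq mu k) = 0 := by
  induction k using Nat.strong_induction_on generalizing m with
  | _ k ih =>
    obtain ⟨m, rfl⟩ := Nat.exists_eq_add_of_lt hkm
    rw [pow_succ, map_mul, Module.End.mul_apply, aeval_shift_X_sub_C_basisSeq, map_sum]
    refine Finset.sum_eq_zero fun j hj => ?_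
    rw [map_smul, ih j (Finset.mem_range.mp hj) (by grind), smul_zero]

def polyExpSpan (mu : ℂ) (s : ℕ) : Submodule ℂ (ℕ → ℂ) :=
  Submodule.span ℂ (Set.range fun k : Fin (s + 1) => basisSeq mu k)

section PolyExpSpan

variable {mu : ℂ} {s : ℕ}

theorem basisSeq_mem_polyExpSpan {k : ℕ} (hk : k ≤ s) : basisSeq mu k ∈ polyExpSpan mu s :=
  Submodule.subset_span ⟨⟨k, Nat.lt_succ_of_le hk⟩, rfl⟩

theorem shift_mem_polyExpSpan {y : ℕ → ℂ} (hy : y ∈ polyExpSpan mu s) :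
    shift y ∈ polyExpSpan mu s := by
  suffices polyExpSpan mu s ≤ (polyExpSpan mu s).comap shift from this hy
  refine Submodule.span_le.mpr ?_
  rintro _ ⟨k, rfl⟩
  have hshift : shift (basisSeq mu k)
      = aeval shift (X - C mu) (basisSeq mu k) + mu • basisSeq mu k := by
    simp
  rw [SetLike.mem_coe, Submodule.mem_comap, hshift, aeval_shift_X_sub_C_basisSeq]
  refine Submodule.add_mem _ (Submodule.sum_mem _ fun j hj => Submodule.smul_mem _ _ ?_)
    (Submodule.smul_mem _ _ (basisSeq_mem_polyExpSpan k.is_le))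
  exact basisSeq_mem_polyExpSpan (by grind)

theorem aeval_shift_X_sub_C_pow_eq_zero_of_mem {y : ℕ → ℂ} (hy : y ∈ polyExpSpan mu s) :
    aeval shift ((X - C mu) ^ (s + 1)) y = 0 := by
  suffices polyExpSpan mu s ≤ LinearMap.ker (aeval shift ((X - C mu) ^ (s + 1))) from this hy
  refine Submodule.span_le.mpr ?_
  rintro _ ⟨k, rfl⟩
  exact aeval_shift_X_sub_C_pow_basisSeq mu k.is_lt

end PolyExpSpan

theorem stmt_9_general (p : Polynomial ℂ) (mu : ℂ) (hroot : p.eval mu ≠ 0) (s : ℕ)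
    (L : Submodule ℂ (ℕ → ℂ))
    (hL : L = Submodule.span ℂ (Set.range fun k : Fin (s + 1) => basisSeq mu k)) :
    ∃ h : ∀ y ∈ L, (Polynomial.aeval shift p) y ∈ L,
      Function.Bijective (((Polynomial.aeval shift p) :
        (ℕ → ℂ) →ₗ[ℂ] (ℕ → ℂ)).restrict h) := by
  change L = polyExpSpan mu s at hL
  subst hL
  have hinv (y : ℕ → ℂ) (hy : y ∈ polyExpSpan mu s) : aeval shift p y ∈ polyExpSpan mu s :=
    aeval_apply_mem_of_mapsTo (fun _ => shift_mem_polyExpSpan) p hy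
  have : FiniteDimensional ℂ (polyExpSpan mu s) :=
    FiniteDimensional.span_of_finite ℂ (Set.finite_range _)
  have hcop : IsCoprime p ((X - C mu) ^ (s + 1)) := by
    refine IsCoprime.pow_right (IsCoprime.symm ?_)
    rwa [(irreducible_X_sub_C mu).coprime_iff_not_dvd, dvd_iff_isRoot]
  exact ⟨hinv, bijective_restrict_aeval_of_isCoprime hcop
    (fun _ => aeval_shift_X_sub_C_pow_eq_zero_of_mem) hinv⟩

theorem stmt_9 (p : Polynomial ℂ) (hmonic : p.Monic) (hdeg : 1 ≤ p.natDegree)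
    (h0 : p.eval 0 ≠ 0) (mu : ℂ) (hmu : mu ≠ 0) (hroot : p.eval mu ≠ 0) (s : ℕ)
    (L : Submodule ℂ (ℕ → ℂ))
    (hL : L = Submodule.span ℂ (Set.range fun k : Fin (s + 1) => basisSeq mu k)) :
    ∃ h : ∀ y ∈ L, (Polynomial.aeval shift p) y ∈ L,
      Function.Bijective (((Polynomial.aeval shift p) :
        (ℕ → ℂ) →ₗ[ℂ] (ℕ → ℂ)).restrict h) :=
  stmt_9_general p mu hroot s L hL
end

section
/- Let p(X) = (X − μ)^m · q(X) be a monic complex polynomial with q(μ) ≠ 0, μ ≠ 0, p(0) ≠ 0. Then for every f in span{μ^n, n μ^n, …, n^s μ^n}, the difference equation p(T)y = f has a solution y in span{n^m μ^n, n^{m+1} μ^n, …, n^{m+s} μ^n}, and this solution is unique within that span. -/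
/-!
On sequences of the form `n ↦ P(n) μ^n`, the operator `p(T)` acts through the Euler operator
`θ = X · d/dX`: expanding `(n + i)^d` binomially gives
`p(T)(n^d μ^n) = ∑ᵢ C(d, i) (θ^{d-i} p)(μ) · n^i μ^n`.
Since `μ` is a root of `p` of multiplicity exactly `m`, `(θ^j p)(μ)` vanishes for `j < m` and equals
`μ^m m! q(μ) ≠ 0` for `j = m`. Hence, in the bases `(n^{m+k} μ^n)_{k ≤ s}` and `(n^k μ^n)_{k ≤ s}`,
`p(T)` has an upper triangular matrix with nonzero diagonal, and the linear independence of the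
sequences `n^k μ^n` turns its invertibility into existence and uniqueness of `y`.
-/

open Polynomial

open Finset Matrix
open scoped Nat

theorem existsUnique_mem_span_map_eq_of_isUnit {R M N ι : Type*} [CommRing R]
    [AddCommMonoid M] [Module R M] [AddCommMonoid N] [Module R N] [Fintype ι] [DecidableEq ι]
    (L : M →ₗ[R] N) {u : ι → M} {v : ι → N} (hv : LinearIndependent R v)
    {A : Matrix ι ι R} (hA : IsUnit A) (hLu : ∀ k, L (u k) = ∑ j, A j k • v j)
    {f : N} (hf : f ∈ Submodule.span R (Set.range v)) :
    ∃! y, y ∈ Submodule.span R (Set.range u) ∧ L y = f := by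
  have hL (a : ι → R) : L (∑ k, a k • u k) = ∑ j, (A *ᵥ a) j • v j := by
    simp only [map_sum, map_smul, hLu, Finset.smul_sum, smul_smul, Matrix.mulVec, dotProduct,
      Finset.sum_smul]
    rw [Finset.sum_comm]
    simp only [mul_comm]
  obtain ⟨b, rfl⟩ := (Submodule.mem_span_range_iff_exists_fun R).mp hf
  obtain ⟨a, rfl⟩ := Matrix.mulVec_surjective_iff_isUnit.mpr hA b
  refine ⟨∑ k, a k • u k, ⟨(Submodule.mem_span_range_iff_exists_fun R).mpr ⟨a, rfl⟩, hL a⟩, ?_⟩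
  rintro _ ⟨hy, hLy⟩
  obtain ⟨a', rfl⟩ := (Submodule.mem_span_range_iff_exists_fun R).mp hy
  have hAa : A *ᵥ a' = A *ᵥ a :=
    funext <| Fintype.linearIndependent_iffₛ.mp hv _ _ (by rw [← hL, hLy])
  rw [Matrix.mulVec_injective_of_isUnit hA hAa]

section EulerOperator

variable {R : Type*}

noncomputable def eulerDeriv [CommSemiring R] (r : R[X]) : R[X] := X * derivative r

theorem coeff_eulerDeriv [CommSemiring R] (r : R[X]) (i : ℕ) :
    (eulerDeriv r).coeff i = i * r.coeff i := by
  cases i with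
  | zero => simp [eulerDeriv]
  | succ i => rw [eulerDeriv, coeff_X_mul, coeff_derivative]; push_cast; ring

theorem coeff_eulerDeriv_iterate [CommSemiring R] (j : ℕ) (r : R[X]) (i : ℕ) :
    (eulerDeriv^[j] r).coeff i = (i : R) ^ j * r.coeff i := by
  induction j generalizing r with
  | zero => simp
  | succ j ih => rw [Function.iterate_succ_apply, ih, coeff_eulerDeriv, pow_succ]; ring

theorem eval_eulerDeriv_iterate [CommSemiring R] (j : ℕ) (r : R[X]) (x : R) :
    (eulerDeriv^[j] r).eval x =
      ∑ i ∈ range (r.natDegree + 1), (i : R) ^ j * r.coeff i * x ^ i := by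
  have hdeg : (eulerDeriv^[j] r).natDegree < r.natDegree + 1 := by
    refine Nat.lt_succ_of_le (natDegree_le_iff_coeff_eq_zero.mpr fun i hi => ?_)
    rw [coeff_eulerDeriv_iterate, coeff_eq_zero_of_natDegree_lt hi, mul_zero]
  simp only [eval_eq_sum_range' hdeg, coeff_eulerDeriv_iterate]

theorem exists_eulerDeriv_iterate_X_sub_C_pow_mul [CommRing R] (a : R) (q : R[X]) {m j : ℕ}
    (hj : j ≤ m) : ∃ h : R[X], eulerDeriv^[j] ((X - C a) ^ m * q) = (X - C a) ^ (m - j) * h ∧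
      h.eval a = a ^ j * m.descFactorial j * q.eval a := by
  induction j with
  | zero => exact ⟨q, by simp⟩
  | succ j ih =>
    obtain ⟨h, hfac, hval⟩ := ih (by omega)
    have hmj : m - j = m - (j + 1) + 1 := by omega
    refine ⟨X * (C ((m - j : ℕ) : R) * h + (X - C a) * derivative h), ?_, ?_⟩
    · rw [Function.iterate_succ_apply', hfac, eulerDeriv, derivative_mul, derivative_pow,
        derivative_sub, derivative_X, derivative_C, sub_zero, mul_one, hmj]
      push_cast [hmj]
      ring
    · simp only [eval_mul, eval_add, eval_X, eval_C, eval_sub, sub_self, zero_mul, add_zero, hval,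
        Nat.descFactorial_succ]
      push_cast
      ring

theorem eval_eulerDeriv_iterate_X_sub_C_pow_mul_of_lt [CommRing R] (a : R) (q : R[X]) {m j : ℕ}
    (hj : j < m) : (eulerDeriv^[j] ((X - C a) ^ m * q)).eval a = 0 := by
  obtain ⟨h, hfac, -⟩ := exists_eulerDeriv_iterate_X_sub_C_pow_mul a q hj.le
  rw [hfac, eval_mul, eval_pow, eval_sub, eval_X, eval_C, sub_self, zero_pow (by omega), zero_mul]

theorem eval_eulerDeriv_iterate_X_sub_C_pow_mul_self [CommRing R] (a : R) (q : R[X]) (m : ℕ) :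
    (eulerDeriv^[m] ((X - C a) ^ m * q)).eval a = a ^ m * m ! * q.eval a := by
  obtain ⟨h, hfac, hval⟩ := exists_eulerDeriv_iterate_X_sub_C_pow_mul a q le_rfl
  rw [hfac, Nat.sub_self, pow_zero, one_mul, hval, Nat.descFactorial_self]

end EulerOperator

theorem shift_pow_apply (i : ℕ) (y : ℕ → ℂ) (n : ℕ) : (shift ^ i) y n = y (n + i) := by
  induction i generalizing y n with
  | zero => rfl
  | succ i ih => rw [pow_succ, Module.End.mul_apply, ih]; rfl

theorem aeval_shift_apply (p : ℂ[X]) (y : ℕ → ℂ) (n : ℕ) :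
    aeval shift p y n = ∑ i ∈ range (p.natDegree + 1), p.coeff i * y (n + i) := by
  simp only [aeval_eq_sum_range, LinearMap.sum_apply, Finset.sum_apply, LinearMap.smul_apply,
    Pi.smul_apply, smul_eq_mul, shift_pow_apply]

noncomputable def shiftCoeff (p : ℂ[X]) (mu : ℂ) (d i : ℕ) : ℂ :=
  d.choose i * (eulerDeriv^[d - i] p).eval mu

theorem aeval_shift_basisSeq (p : ℂ[X]) (mu : ℂ) (d : ℕ) :
    aeval shift p (basisSeq mu d) = ∑ i ∈ range (d + 1), shiftCoeff p mu d i • basisSeq mu i := by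
  funext n
  simp only [aeval_shift_apply, Finset.sum_apply, Pi.smul_apply, smul_eq_mul, shiftCoeff,
    eval_eulerDeriv_iterate, basisSeq, Nat.cast_add, add_pow, pow_add, Finset.mul_sum,
    Finset.sum_mul]
  rw [Finset.sum_comm]
  refine Finset.sum_congr rfl fun i _ => Finset.sum_congr rfl fun l _ => ?_
  ring

noncomputable def polySeq (mu : ℂ) : ℂ[X] →ₗ[ℂ] ℕ → ℂ where
  toFun P n := P.eval (n : ℂ) * mu ^ n
  map_add' P Q := by funext n; simp [add_mul]
  map_smul' c P := by funext n; simp [mul_assoc]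

theorem ker_polySeq {mu : ℂ} (hmu : mu ≠ 0) : LinearMap.ker (polySeq mu) = ⊥ := by
  refine LinearMap.ker_eq_bot'.mpr fun P hP => eq_zero_of_infinite_isRoot P ?_
  refine Set.infinite_of_injective_forall_mem Nat.cast_injective fun n => ?_
  have hn := congrFun hP n
  exact (mul_eq_zero.mp hn).resolve_right (pow_ne_zero n hmu)

theorem linearIndependent_basisSeq {mu : ℂ} (hmu : mu ≠ 0) :
    LinearIndependent ℂ (basisSeq mu) := by
  have hb : basisSeq mu = polySeq mu ∘ basisMonomials ℂ := by
    funext k n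
    simp [basisSeq, polySeq, coe_basisMonomials]
  rw [hb]
  exact (basisMonomials ℂ).linearIndependent.map' (polySeq mu) (ker_polySeq hmu)

section Resonant

variable {mu : ℂ} {m : ℕ} {q : ℂ[X]}

theorem shiftCoeff_add_eq_zero {k i : ℕ} (hki : k < i) :
    shiftCoeff ((X - C mu) ^ m * q) mu (m + k) i = 0 := by
  rcases lt_or_ge (m + k) i with hi | hi
  · rw [shiftCoeff, Nat.choose_eq_zero_of_lt hi, Nat.cast_zero, zero_mul]
  · rw [shiftCoeff, eval_eulerDeriv_iterate_X_sub_C_pow_mul_of_lt _ _ (by omega), mul_zero]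

theorem aeval_shift_basisSeq_add (s : ℕ) (k : Fin (s + 1)) :
    aeval shift ((X - C mu) ^ m * q) (basisSeq mu (m + k)) =
      ∑ j : Fin (s + 1), shiftCoeff ((X - C mu) ^ m * q) mu (m + k) j • basisSeq mu j := by
  set g : ℕ → ℕ → ℂ := fun i =>
    shiftCoeff ((X - C mu) ^ m * q) mu (m + k) i • basisSeq mu i
  have hg : ∀ i : ℕ, i ≥ k + 1 → g i = 0 := fun i hi => by
    simp only [g, shiftCoeff_add_eq_zero (Nat.lt_of_succ_le hi), zero_smul]
  rw [aeval_shift_basisSeq, Fin.sum_univ_eq_sum_range g,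
    eventually_constant_sum hg (n := m + k + 1) (by omega),
    eventually_constant_sum hg (n := s + 1) (by omega)]

noncomputable def resonantMatrix (p : ℂ[X]) (mu : ℂ) (m s : ℕ) :
    Matrix (Fin (s + 1)) (Fin (s + 1)) ℂ :=
  Matrix.of fun j k => shiftCoeff p mu (m + k) j

theorem isUnit_resonantMatrix (hmu : mu ≠ 0) (hq : q.eval mu ≠ 0) (s : ℕ) :
    IsUnit (resonantMatrix ((X - C mu) ^ m * q) mu m s) := by
  have hupper : (resonantMatrix ((X - C mu) ^ m * q) mu m s).IsUpperTriangular :=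
    fun j k hkj => shiftCoeff_add_eq_zero (Fin.lt_def.mp hkj)
  rw [isUnit_iff_isUnit_det, det_of_isUpperTriangular hupper, isUnit_iff_ne_zero,
    Finset.prod_ne_zero_iff]
  intro k _
  rw [resonantMatrix, of_apply, shiftCoeff, Nat.add_sub_cancel,
    eval_eulerDeriv_iterate_X_sub_C_pow_mul_self]
  have hchoose : ((m + k).choose k : ℂ) ≠ 0 :=
    Nat.cast_ne_zero.mpr (Nat.choose_pos (by omega)).ne'
  exact mul_ne_zero hchoose (mul_ne_zero (mul_ne_zero (pow_ne_zero m hmu)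
    (Nat.cast_ne_zero.mpr (Nat.factorial_ne_zero m))) hq)

end Resonant

theorem stmt_11_general (mu : ℂ) (hmu : mu ≠ 0) (m : ℕ) (q : Polynomial ℂ)
    (p : Polynomial ℂ) (hp : p = (X - C mu) ^ m * q)
    (hq : q.eval mu ≠ 0) (s : ℕ)
    (f : ℕ → ℂ)
    (hf : f ∈ Submodule.span ℂ (Set.range fun k : Fin (s + 1) => basisSeq mu k)) :
    ∃! y : ℕ → ℂ,
      y ∈ Submodule.span ℂ (Set.range fun k : Fin (s + 1) => basisSeq mu (m + k)) ∧
      (Polynomial.aeval shift p) y = f := by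
  subst hp
  exact existsUnique_mem_span_map_eq_of_isUnit _
    ((linearIndependent_basisSeq hmu).comp _ Fin.val_injective) (isUnit_resonantMatrix hmu hq s)
    (aeval_shift_basisSeq_add s) hf

theorem stmt_11 (mu : ℂ) (hmu : mu ≠ 0) (m : ℕ) (q : Polynomial ℂ)
    (p : Polynomial ℂ) (hp : p = (X - C mu) ^ m * q)
    (hmonic : p.Monic) (hq : q.eval mu ≠ 0) (h0 : p.eval 0 ≠ 0) (s : ℕ)
    (f : ℕ → ℂ)
    (hf : f ∈ Submodule.span ℂ (Set.range fun k : Fin (s + 1) => basisSeq mu k)) :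
    ∃! y : ℕ → ℂ,
      y ∈ Submodule.span ℂ (Set.range fun k : Fin (s + 1) => basisSeq mu (m + k)) ∧
      (Polynomial.aeval shift p) y = f :=
  stmt_11_general mu hmu m q p hp hq s f hf
end
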